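/- For every discrete random variable X, Λ(X) ≤ H(X), with equality if and only if X is uniformly distributed. -/

import Mathlib

noncomputable def lamt (i : ℕ) : ℝ :=
  ((i : ℝ) + 1) * Real.logb 2 ((i : ℝ) + 1) - (i : ℝ) * Real.logb 2 (i : ℝ)

def IsPMF {X : Type*} (p : X → ℝ) : Prop := (∀ x, 0 ≤ p x) ∧ HasSum p 1

def IsDescRearrange {X : Type*} (p : X → ℝ) (q : ℕ → ℝ) : Prop :=
  Antitone q ∧ ∀ t : ℝ, 0 < t → {x | t < p x}.ncard = {i | t < q i}.ncard

def IsUniform {X : Type*} (p : X → ℝ) : Prop :=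
  ∃ S : Finset X, S.Nonempty ∧ (∀ x ∈ S, p x = ((S.card : ℝ))⁻¹) ∧ ∀ x ∉ S, p x = 0

/-- Shannon entropy in bits, `H(p) = ∑_x −p(x) log₂ p(x)` (with `0 log 0 = 0`). -/
noncomputable def shEnt {X : Type*} (p : X → ℝ) : ℝ :=
  ∑' x, -(p x * Real.logb 2 (p x))

open Filter Topology ENNReal
open scoped NNReal

lemma lamt_nonneg (i : ℕ) : 0 ≤ lamt i := by
  unfold lamt
  rcases Nat.eq_zero_or_pos i with h | h
  · subst h; simp
  · have h1 : (1:ℝ) ≤ (i:ℝ) := by exact_mod_cast h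
    have hlb : (0:ℝ) ≤ Real.logb 2 i := Real.logb_nonneg one_lt_two h1
    have : (i:ℝ) * Real.logb 2 i ≤ ((i:ℝ)+1) * Real.logb 2 ((i:ℝ)+1) := by
      apply mul_le_mul (by linarith) (Real.logb_le_logb_of_le one_lt_two (by linarith) (by linarith)) hlb (by linarith)
    linarith

lemma logb_le_lamt (i : ℕ) : Real.logb 2 ((i:ℝ)+1) ≤ lamt i := by
  unfold lamt
  rcases Nat.eq_zero_or_pos i with h | h
  · subst h; simp
  · have h1 : (1:ℝ) ≤ (i:ℝ) := by exact_mod_cast h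
    have : (i:ℝ) * Real.logb 2 i ≤ (i:ℝ) * Real.logb 2 ((i:ℝ)+1) := by
      apply mul_le_mul_of_nonneg_left (Real.logb_le_logb_of_le one_lt_two (by linarith) (by linarith)) (by linarith)
    nlinarith

lemma sum_lamt (n : ℕ) : ∑ i ∈ Finset.range n, lamt i = (n:ℝ) * Real.logb 2 (n:ℝ) := by
  have : ∀ i : ℕ, lamt i = (fun k : ℕ => (k:ℝ) * Real.logb 2 (k:ℝ)) (i+1)
      - (fun k : ℕ => (k:ℝ) * Real.logb 2 (k:ℝ)) i := by
    intro i; simp only [lamt]; push_cast; ring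
  simp_rw [this]
  rw [Finset.sum_range_sub (fun k : ℕ => (k:ℝ) * Real.logb 2 (k:ℝ))]
  simp

open Filter Topology ENNReal
open scoped NNReal

-- telescoping hassum
lemma tele_hasSum (q : ℕ → ℝ) (hA : Antitone q) (h0 : ∀ i, 0 ≤ q i)
    (hlim : Tendsto q atTop (nhds 0)) (i : ℕ) :
    HasSum (fun n => if i ≤ n then q n - q (n+1) else 0) (q i) := by
  have key : HasSum (fun n => q (i+n) - q (i+n+1)) (q i) := by
    have hsum : ∀ N, ∑ n ∈ Finset.range N, (q (i+n) - q (i+n+1)) = q i - q (i+N) := by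
      intro N
      have h := Finset.sum_range_sub' (fun n => q (i+n)) N
      simp only [Nat.add_zero] at h
      rw [← h]
      exact Finset.sum_congr rfl (fun n _ => by rw [Nat.add_assoc])
    have hs : Summable (fun n => q (i+n) - q (i+n+1)) := by
      apply summable_of_sum_range_le (c := q i) (fun n => sub_nonneg.2 (hA (Nat.le_succ _)))
      intro N; rw [hsum]; linarith [h0 (i+N)]
    have hcomp : Tendsto (fun N => q (i+N)) atTop (nhds 0) := by
      apply hlim.comp
      exact tendsto_atTop_atTop.2 (fun b => ⟨b, fun a ha => by omega⟩)
    have ht : Tendsto (fun N => ∑ n ∈ Finset.range N, (q (i+n) - q (i+n+1))) atTop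
        (nhds (q i)) := by
      simp_rw [hsum]
      simpa using tendsto_const_nhds.sub hcomp
    have h2 := hs.hasSum.tendsto_sum_nat
    have heq := tendsto_nhds_unique h2 ht
    rw [← heq]
    exact hs.hasSum
  have hinj : Function.Injective (fun n : ℕ => i + n) := fun a b h => by simpa using h
  have hz : ∀ m ∉ Set.range (fun n : ℕ => i + n),
      (if i ≤ m then q m - q (m+1) else 0) = 0 := by
    intro m hm
    simp only [Set.mem_range, not_exists] at hm
    have : ¬ i ≤ m := fun h => hm (m - i) (by omega)
    simp [this]
  rw [← Function.Injective.hasSum_iff hinj hz]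
  convert key using 1
  funext n
  simp [Nat.le_add_right]

lemma ofReal_tele (q : ℕ → ℝ) (hA : Antitone q) (h0 : ∀ i, 0 ≤ q i)
    (hlim : Tendsto q atTop (nhds 0)) (i : ℕ) :
    ENNReal.ofReal (q i) = ∑' n, if i ≤ n then ENNReal.ofReal (q n - q (n+1)) else 0 := by
  have h := tele_hasSum q hA h0 hlim i
  have h2 := ENNReal.ofReal_tsum_of_nonneg
    (f := fun n => if i ≤ n then q n - q (n+1) else 0)
    (fun n => by split <;> simp [sub_nonneg.2 (hA (Nat.le_succ _))]) h.summable
  rw [h.tsum_eq] at h2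
  rw [h2]
  congr 1; funext n
  split <;> simp [*]

lemma swap_sum (q : ℕ → ℝ) (hA : Antitone q) (h0 : ∀ i, 0 ≤ q i)
    (hlim : Tendsto q atTop (nhds 0)) (c : ℕ → ℝ≥0∞) :
    ∑' i, ENNReal.ofReal (q i) * c i
      = ∑' n, ENNReal.ofReal (q n - q (n+1)) * ∑ i ∈ Finset.range (n+1), c i := by
  calc ∑' i, ENNReal.ofReal (q i) * c i
      = ∑' i, ∑' n, (if i ≤ n then ENNReal.ofReal (q n - q (n+1)) else 0) * c i := by
        congr 1; funext i
        rw [ofReal_tele q hA h0 hlim i, ENNReal.tsum_mul_right]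
    _ = ∑' n, ∑' i, (if i ≤ n then ENNReal.ofReal (q n - q (n+1)) else 0) * c i :=
        ENNReal.tsum_comm
    _ = ∑' n, ENNReal.ofReal (q n - q (n+1)) * ∑ i ∈ Finset.range (n+1), c i := by
        congr 1; funext n
        have : ∀ i, (if i ≤ n then ENNReal.ofReal (q n - q (n+1)) else 0) * c i
            = if i ∈ Finset.range (n+1) then ENNReal.ofReal (q n - q (n+1)) * c i else 0 := by
          intro i
          by_cases h : i ≤ n <;> simp [h, Finset.mem_range, Nat.lt_succ_iff]
        simp_rw [this]
        rw [tsum_eq_sum (s := Finset.range (n+1)) (fun b hb => by simp [hb]), Finset.mul_sum]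
        exact Finset.sum_congr rfl (fun i hi => by simp [hi])

lemma core_ineq (q : ℕ → ℝ) (n : ℕ) (hpos : ∀ i ≤ n, 0 < q i)
    (hsum1 : ∑ i ∈ Finset.range (n+1), q i ≤ 1) :
    ((n:ℝ)+1) * Real.logb 2 ((n:ℝ)+1) ≤ ∑ i ∈ Finset.range (n+1), (-Real.logb 2 (q i))
    ∧ (((n:ℝ)+1) * Real.logb 2 ((n:ℝ)+1) = ∑ i ∈ Finset.range (n+1), (-Real.logb 2 (q i))
        → ∀ i ≤ n, q i = (((n:ℝ)+1))⁻¹) := by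
  set m : ℝ := (n:ℝ)+1 with hm
  have hmpos : 0 < m := by positivity
  have key : ∀ i ∈ Finset.range (n+1), Real.log (m * q i) ≤ m * q i - 1 := by
    intro i hi
    exact Real.log_le_sub_one_of_pos (by
      have := hpos i (Nat.lt_succ_iff.mp (Finset.mem_range.mp hi)); positivity)
  have hsum2 : ∑ i ∈ Finset.range (n+1), (m * q i - 1) ≤ 0 := by
    rw [Finset.sum_sub_distrib]
    simp only [Finset.sum_const, Finset.card_range, nsmul_eq_mul, mul_one]
    rw [← Finset.mul_sum]
    push_cast
    nlinarith
  have hlogsum : ∑ i ∈ Finset.range (n+1), Real.log (m * q i) ≤ 0 :=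
    le_trans (Finset.sum_le_sum key) hsum2
  have hexpand : ∀ i ∈ Finset.range (n+1),
      Real.logb 2 (m * q i) = Real.logb 2 m + Real.logb 2 (q i) := by
    intro i hi
    exact Real.logb_mul (ne_of_gt hmpos)
      (ne_of_gt (hpos i (Nat.lt_succ_iff.mp (Finset.mem_range.mp hi))))
  have hlog2 : (0:ℝ) < Real.log 2 := Real.log_pos one_lt_two
  have hlogbsum : ∑ i ∈ Finset.range (n+1), Real.logb 2 (m * q i) ≤ 0 := by
    simp only [Real.logb]
    rw [← Finset.sum_div]
    exact div_nonpos_of_nonpos_of_nonneg hlogsum hlog2.le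
  have hsplit : ∑ i ∈ Finset.range (n+1), Real.logb 2 (m * q i)
      = m * Real.logb 2 m + ∑ i ∈ Finset.range (n+1), Real.logb 2 (q i) := by
    rw [Finset.sum_congr rfl hexpand, Finset.sum_add_distrib]
    simp only [Finset.sum_const, Finset.card_range, nsmul_eq_mul]
    push_cast
    ring
  have hmain : m * Real.logb 2 m ≤ ∑ i ∈ Finset.range (n+1), (-Real.logb 2 (q i)) := by
    rw [Finset.sum_neg_distrib]
    linarith [hlogbsum, hsplit]
  refine ⟨hmain, ?_⟩
  intro heq i hi
  -- equality case
  have hzero : ∑ i ∈ Finset.range (n+1), Real.logb 2 (m * q i) = 0 := by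
    rw [hsplit, Finset.sum_neg_distrib] at *
    linarith [heq]
  have hlzero : ∑ i ∈ Finset.range (n+1), Real.log (m * q i) = 0 := by
    simp only [Real.logb] at hzero
    rw [← Finset.sum_div] at hzero
    rcases div_eq_zero_iff.mp hzero with h | h
    · exact h
    · linarith
  have hg : ∑ i ∈ Finset.range (n+1), (m * q i - 1 - Real.log (m * q i)) = 0 := by
    have hle : ∑ i ∈ Finset.range (n+1), (m * q i - 1 - Real.log (m * q i)) ≤ 0 := by
      rw [Finset.sum_sub_distrib, hlzero]
      linarith
    have hge : 0 ≤ ∑ i ∈ Finset.range (n+1), (m * q i - 1 - Real.log (m * q i)) :=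
      Finset.sum_nonneg (fun j hj => by linarith [key j hj])
    linarith
  have heach := (Finset.sum_eq_zero_iff_of_nonneg
    (fun j hj => by linarith [key j hj])).mp hg i (Finset.mem_range.mpr (Nat.lt_succ_iff.mpr hi))
  have hqi : 0 < q i := hpos i hi
  have : m * q i = 1 := by
    by_contra hne
    have := Real.log_lt_sub_one_of_pos (by positivity : (0:ℝ) < m * q i) hne
    linarith
  field_simp
  linarith [this]

lemma q_le_one (q : ℕ → ℝ) (h0 : ∀ i, 0 ≤ q i) (hs : Summable q) (h1 : ∑' i, q i = 1)
    (i : ℕ) : q i ≤ 1 := by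
  have := Summable.le_tsum hs i (fun j _ => h0 j)
  linarith [h1 ▸ this]

lemma stepC (q : ℕ → ℝ) (hA : Antitone q) (h0 : ∀ i, 0 ≤ q i)
    (hlim : Tendsto q atTop (nhds 0)) (hs : Summable q) (h1 : ∑' i, q i = 1) :
    (∑' i, ENNReal.ofReal (q i * lamt i)) ≤ (∑' i, ENNReal.ofReal (-(q i * Real.logb 2 (q i))))
    ∧ ((∑' i, ENNReal.ofReal (-(q i * Real.logb 2 (q i)))) ≠ ⊤ →
       (∑' i, ENNReal.ofReal (q i * lamt i)) = (∑' i, ENNReal.ofReal (-(q i * Real.logb 2 (q i))))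
       → ∃ n : ℕ, (∀ i ≤ n, q i = (((n:ℝ)+1))⁻¹) ∧ (∀ i, n < i → q i = 0)) := by
  have hq1 : ∀ i, q i ≤ 1 := q_le_one q h0 hs h1
  set d : ℕ → ℝ≥0∞ := fun n => ENNReal.ofReal (q n - q (n+1)) with hd
  set Sn : ℕ → ℝ≥0∞ := fun n => ENNReal.ofReal (((n:ℝ)+1) * Real.logb 2 ((n:ℝ)+1)) with hSn
  set Ln : ℕ → ℝ≥0∞ := fun n => ∑ i ∈ Finset.range (n+1), ENNReal.ofReal (-Real.logb 2 (q i))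
    with hLn
  have hLam : (∑' i, ENNReal.ofReal (q i * lamt i)) = ∑' n, d n * Sn n := by
    have e1 : ∀ i : ℕ, ENNReal.ofReal (q i * lamt i)
        = ENNReal.ofReal (q i) * ENNReal.ofReal (lamt i) := fun i => ENNReal.ofReal_mul (h0 i)
    simp_rw [e1]
    rw [swap_sum q hA h0 hlim (fun i => ENNReal.ofReal (lamt i))]
    congr 1; funext n
    congr 1
    rw [← ENNReal.ofReal_sum_of_nonneg (fun i _ => lamt_nonneg i)]
    congr 1
    have := sum_lamt (n+1)
    push_cast at this
    exact this
  have hH : (∑' i, ENNReal.ofReal (-(q i * Real.logb 2 (q i)))) = ∑' n, d n * Ln n := by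
    have e1 : ∀ i : ℕ, ENNReal.ofReal (-(q i * Real.logb 2 (q i)))
        = ENNReal.ofReal (q i) * ENNReal.ofReal (-Real.logb 2 (q i)) := by
      intro i
      rw [← ENNReal.ofReal_mul (h0 i)]
      ring_nf
    simp_rw [e1]
    exact swap_sum q hA h0 hlim (fun i => ENNReal.ofReal (-Real.logb 2 (q i)))
  have hsum1 : ∀ n : ℕ, ∑ i ∈ Finset.range (n+1), q i ≤ 1 := by
    intro n
    rw [← h1]
    exact Summable.sum_le_tsum _ (fun j _ => h0 j) hs
  have hpos : ∀ n : ℕ, q (n+1) < q n → ∀ i ≤ n, 0 < q i := by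
    intro n hn i hi
    calc (0:ℝ) ≤ q (n+1) := h0 _
    _ < q n := hn
    _ ≤ q i := hA hi
  have hLS : ∀ n : ℕ, q (n+1) < q n →
      Ln n = ENNReal.ofReal (∑ i ∈ Finset.range (n+1), (-Real.logb 2 (q i))) := by
    intro n hn
    rw [hLn, ENNReal.ofReal_sum_of_nonneg]
    intro i hi
    have hqi := hpos n hn i (Nat.lt_succ_iff.mp (Finset.mem_range.mp hi))
    simp only [neg_nonneg]
    exact Real.logb_nonpos one_lt_two (h0 i) (hq1 i)
  have hpt : ∀ n : ℕ, d n * Sn n ≤ d n * Ln n := by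
    intro n
    by_cases hn : q (n+1) < q n
    · apply mul_le_mul_right
      rw [hLS n hn, hSn]
      exact ENNReal.ofReal_le_ofReal
        (core_ineq q n (hpos n hn) (hsum1 n)).1
    · have : q n = q (n+1) := le_antisymm (not_lt.mp hn) (hA (Nat.le_succ n))
      have : d n = 0 := by rw [hd]; simp [this]
      simp [this]
  constructor
  · rw [hLam, hH]
    exact ENNReal.tsum_le_tsum hpt
  · intro hne heq
    rw [hLam, hH] at heq
    have hne' : (∑' n, d n * Sn n) ≠ ⊤ := by rw [heq]; exact hH ▸ hne
    have hpteq : ∀ n, d n * Sn n = d n * Ln n := by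
      intro n
      by_contra hc
      have hlt : d n * Sn n < d n * Ln n := lt_of_le_of_ne (hpt n) hc
      have := ENNReal.tsum_lt_tsum hne' hpt hlt
      exact absurd heq (ne_of_lt this)
    -- each n with strict descent gives flatness
    have claim1 : ∀ n : ℕ, q (n+1) < q n → ∀ i ≤ n, q i = (((n:ℝ)+1))⁻¹ := by
      intro n hn
      have hd0 : d n ≠ 0 := by
        rw [hd]
        simp only [ne_eq, ENNReal.ofReal_eq_zero, not_le]
        linarith
      have hdt : d n ≠ ⊤ := ENNReal.ofReal_ne_top
      have hSL : Sn n = Ln n := (ENNReal.mul_right_inj hd0 hdt).mp (hpteq n)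
      rw [hLS n hn, hSn] at hSL
      have hsnn : (0:ℝ) ≤ ((n:ℝ)+1) * Real.logb 2 ((n:ℝ)+1) := by
        apply mul_nonneg (by positivity)
        apply Real.logb_nonneg one_lt_two
        have : (0:ℝ) ≤ (n:ℝ) := Nat.cast_nonneg n
        linarith
      have h2 := (core_ineq q n (hpos n hn) (hsum1 n)).1
      have hreal : ((n:ℝ)+1) * Real.logb 2 ((n:ℝ)+1)
          = ∑ i ∈ Finset.range (n+1), (-Real.logb 2 (q i)) :=
        (ENNReal.ofReal_eq_ofReal_iff hsnn (le_trans hsnn h2)).mp hSL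
      exact (core_ineq q n (hpos n hn) (hsum1 n)).2 hreal
    -- q 0 > 0
    have hq0 : 0 < q 0 := by
      rcases lt_or_eq_of_le (h0 0) with h | h
      · exact h
      · exfalso
        have hz : ∀ i, q i = 0 := fun i => le_antisymm (h ▸ hA (Nat.zero_le i)) (h0 i)
        rw [tsum_congr hz] at h1
        simp at h1
    -- existence of a strict descent
    have hex : ∃ N, q N < q 0 := by
      by_contra hcon
      push_neg at hcon
      have hconst : ∀ N, q N = q 0 := fun N => le_antisymm (hA (Nat.zero_le N)) (hcon N)
      have : Tendsto (fun _ : ℕ => q 0) atTop (nhds 0) := by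
        exact hlim.congr (fun N => hconst N)
      have := tendsto_nhds_unique this tendsto_const_nhds
      linarith
    classical
    let N₀ := Nat.find hex
    have hN₀ : q N₀ < q 0 := Nat.find_spec hex
    have hN₀pos : 0 < N₀ := by
      rcases Nat.eq_zero_or_pos N₀ with h | h
      · rw [h] at hN₀; linarith
      · exact h
    obtain ⟨n₀, hn₀⟩ : ∃ n₀, N₀ = n₀ + 1 := ⟨N₀ - 1, by omega⟩
    have hprev : q n₀ = q 0 := by
      have h1' := Nat.find_min hex (m := n₀) (by omega)
      push_neg at h1'
      exact le_antisymm (hA (Nat.zero_le n₀)) h1'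
    have hdesc : q (n₀+1) < q n₀ := by rw [hprev, ← hn₀]; exact hN₀
    refine ⟨n₀, claim1 n₀ hdesc, ?_⟩
    -- uniqueness: no other descent
    have hnodesc : ∀ m, n₀ < m → ¬ q (m+1) < q m := by
      intro m hm hcon2
      have e1 := claim1 n₀ hdesc 0 (Nat.zero_le _)
      have e2 := claim1 m hcon2 0 (Nat.zero_le _)
      rw [e1] at e2
      have : ((n₀:ℝ)+1) = ((m:ℝ)+1) := by
        have hn1 : (0:ℝ) < (n₀:ℝ)+1 := by positivity
        have hm1 : (0:ℝ) < (m:ℝ)+1 := by positivity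
        field_simp at e2
        linarith
      have : n₀ = m := by exact_mod_cast (by linarith : (n₀:ℝ) = (m:ℝ))
      omega
    -- q constant from n₀+1 on
    have hconst : ∀ k, q (n₀ + 1 + k) = q (n₀ + 1) := by
      intro k
      induction k with
      | zero => rfl
      | succ k ih =>
        have h1' : ¬ q (n₀ + 1 + k + 1) < q (n₀ + 1 + k) := hnodesc (n₀ + 1 + k) (by omega)
        have h2' : q (n₀ + 1 + k + 1) ≤ q (n₀ + 1 + k) := hA (by omega)
        have : q (n₀ + 1 + k + 1) = q (n₀ + 1 + k) := le_antisymm h2' (not_lt.mp h1')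
        rw [show n₀ + 1 + (k + 1) = n₀ + 1 + k + 1 by omega, this, ih]
    have hqz : q (n₀ + 1) = 0 := by
      have ht : Tendsto (fun k : ℕ => q (n₀ + 1 + k)) atTop (nhds 0) := by
        apply hlim.comp
        exact tendsto_atTop_atTop.2 (fun b => ⟨b, fun a ha => by omega⟩)
      have h2'' := ht.congr hconst
      exact (tendsto_nhds_unique h2'' tendsto_const_nhds).symm ▸ rfl
    intro i hi
    have : q i ≤ q (n₀ + 1) := hA (by omega)
    linarith [h0 i, hqz ▸ this]

section StepB

variable {X : Type*}

lemma finite_level_p (p : X → ℝ) (h0 : ∀ x, 0 ≤ p x) (hsum : HasSum p 1) {t : ℝ}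
    (ht : 0 < t) : {x | t < p x}.Finite := by
  by_contra hinf
  obtain ⟨F, hF, hcard⟩ := Set.Infinite.exists_subset_card_eq hinf (⌈t⁻¹⌉₊ + 1)
  have h1 : ∑ x ∈ F, p x ≤ 1 := sum_le_hasSum F (fun x _ => h0 x) hsum
  have h2 : (F.card : ℝ) • t ≤ ∑ x ∈ F, p x :=
    Finset.card_nsmul_le_sum F p t (fun x hx => (hF hx).le) |>.trans_eq' (by simp)
  have h3 : t⁻¹ < (F.card : ℝ) := by
    rw [hcard]
    push_cast
    calc t⁻¹ ≤ (⌈t⁻¹⌉₊ : ℝ) := Nat.le_ceil _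
    _ < (⌈t⁻¹⌉₊ : ℝ) + 1 := by linarith
  have : (1:ℝ) < (F.card : ℝ) * t := by
    calc (1:ℝ) = t⁻¹ * t := by field_simp
    _ < (F.card : ℝ) * t := by apply mul_lt_mul_of_pos_right h3 ht
  simp only [smul_eq_mul] at h2
  linarith

lemma fiber_count (p : X → ℝ) (q : ℕ → ℝ)
    (hfinp : ∀ t : ℝ, 0 < t → {x | t < p x}.Finite)
    (hfinq : ∀ t : ℝ, 0 < t → {i | t < q i}.Finite)
    (hcount : ∀ t : ℝ, 0 < t → {x | t < p x}.ncard = {i | t < q i}.ncard)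
    {v : ℝ} (hv : 0 < v) : {x | p x = v}.ncard = {i | q i = v}.ncard := by
  have hv2 : 0 < v/2 := by linarith
  have Fp := hfinp (v/2) hv2
  have Fq := hfinq (v/2) hv2
  classical
  set K : Finset ℝ := insert (v/2)
    ((Fp.toFinset.image p ∪ Fq.toFinset.image q).filter (· < v)) with hK
  have hKne : K.Nonempty := ⟨v/2, Finset.mem_insert_self _ _⟩
  set t := K.max' hKne with htdef
  have htK : t ∈ K := K.max'_mem hKne
  have htlt : t < v := by
    rcases Finset.mem_insert.mp htK with h | h
    · rw [h]; linarith
    · exact (Finset.mem_filter.mp h).2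
  have htge : v/2 ≤ t := K.le_max' _ (Finset.mem_insert_self _ _)
  have htpos : 0 < t := by linarith
  have keyp : {x | t < p x} = {x | v ≤ p x} := by
    ext x
    simp only [Set.mem_setOf_eq]
    constructor
    · intro hx
      by_contra hcon
      push_neg at hcon
      have hxF : x ∈ Fp.toFinset := by
        simp [Set.Finite.mem_toFinset]
        linarith
      have : p x ∈ K := by
        apply Finset.mem_insert_of_mem
        apply Finset.mem_filter.mpr
        exact ⟨Finset.mem_union_left _ (Finset.mem_image_of_mem p hxF), hcon⟩
      have := K.le_max' _ this
      rw [← htdef] at this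
      linarith
    · intro hx; linarith
  have keyq : {i | t < q i} = {i | v ≤ q i} := by
    ext i
    simp only [Set.mem_setOf_eq]
    constructor
    · intro hi
      by_contra hcon
      push_neg at hcon
      have hiF : i ∈ Fq.toFinset := by
        simp [Set.Finite.mem_toFinset]
        linarith
      have : q i ∈ K := by
        apply Finset.mem_insert_of_mem
        apply Finset.mem_filter.mpr
        exact ⟨Finset.mem_union_right _ (Finset.mem_image_of_mem q hiF), hcon⟩
      have := K.le_max' _ this
      rw [← htdef] at this
      linarith
    · intro hi; linarith
  have hdiffp : {x | p x = v} = {x | v ≤ p x} \ {x | v < p x} := by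
    ext x
    simp only [Set.mem_setOf_eq, Set.mem_diff, not_lt]
    constructor
    · intro h; exact ⟨le_of_eq h.symm, le_of_eq h⟩
    · intro ⟨h1, h2⟩; linarith
  have hdiffq : {i | q i = v} = {i | v ≤ q i} \ {i | v < q i} := by
    ext i
    simp only [Set.mem_setOf_eq, Set.mem_diff, not_lt]
    constructor
    · intro h; exact ⟨le_of_eq h.symm, le_of_eq h⟩
    · intro ⟨h1, h2⟩; linarith
  have hsubp : {x | v < p x} ⊆ {x | v ≤ p x} := fun x hx => by simp only [Set.mem_setOf_eq] at *; linarith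
  have hsubq : {i | v < q i} ⊆ {i | v ≤ q i} := fun i hi => by simp only [Set.mem_setOf_eq] at *; linarith
  have hfinp' : {x | v ≤ p x}.Finite := keyp ▸ hfinp t htpos
  have hfinq' : {i | v ≤ q i}.Finite := keyq ▸ hfinq t htpos
  rw [hdiffp, hdiffq, Set.ncard_diff hsubp (hfinp'.subset hsubp), Set.ncard_diff hsubq (hfinq'.subset hsubq),
    ← keyp, ← keyq, hcount t htpos, hcount v hv]

end StepB

section Bij

variable {X : Type*}

lemma transfer_tsum (p : X → ℝ) (q : ℕ → ℝ)
    (hp0 : ∀ x, 0 ≤ p x) (hq0 : ∀ i, 0 ≤ q i)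
    (hfinp : ∀ t : ℝ, 0 < t → {x | t < p x}.Finite)
    (hfinq : ∀ t : ℝ, 0 < t → {i | t < q i}.Finite)
    (hcount : ∀ t : ℝ, 0 < t → {x | t < p x}.ncard = {i | t < q i}.ncard)
    (f : ℝ → ℝ≥0∞) (hf0 : f 0 = 0) :
    ∑' x, f (p x) = ∑' i, f (q i) := by
  classical
  set P := {x : X // p x ≠ 0} with hP
  set Q := {i : ℕ // q i ≠ 0} with hQ
  set pf : P → ℝ := fun x => p x.1 with hpf
  set qf : Q → ℝ := fun i => q i.1 with hqf
  -- fiber equivalences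
  have hF : ∀ v : ℝ, Nonempty ({x : P // pf x = v} ≃ {i : Q // qf i = v}) := by
    intro v
    by_cases hv : 0 < v
    · -- positive value: equal finite cardinalities
      have hsetp : {x : X | p x = v}.Finite := by
        apply (hfinp (v/2) (by linarith)).subset
        intro x hx
        simp only [Set.mem_setOf_eq] at *
        linarith
      have hsetq : {i : ℕ | q i = v}.Finite := by
        apply (hfinq (v/2) (by linarith)).subset
        intro i hi
        simp only [Set.mem_setOf_eq] at *
        linarith
      have E1 : {x : P // pf x = v} ≃ {x : X // p x = v} :=
        { toFun := fun z => ⟨z.1.1, z.2⟩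
          invFun := fun z => ⟨⟨z.1, by rw [z.2]; exact ne_of_gt hv⟩, z.2⟩
          left_inv := fun z => by ext; rfl
          right_inv := fun z => by ext; rfl }
      have E2 : {i : Q // qf i = v} ≃ {i : ℕ // q i = v} :=
        { toFun := fun z => ⟨z.1.1, z.2⟩
          invFun := fun z => ⟨⟨z.1, by rw [z.2]; exact ne_of_gt hv⟩, z.2⟩
          left_inv := fun z => by ext; rfl
          right_inv := fun z => by ext; rfl }
      haveI : Finite ({x : X | p x = v}) := hsetp.to_subtype
      haveI : Finite ({i : ℕ | q i = v}) := hsetq.to_subtype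
      have hcards : Nat.card {x : X | p x = v} = Nat.card {i : ℕ | q i = v} := by
        rw [Nat.card_coe_set_eq, Nat.card_coe_set_eq]
        exact fiber_count p q hfinp hfinq hcount hv
      obtain ⟨E3⟩ := Finite.card_eq.mp hcards
      exact ⟨E1.trans ((E3.trans E2.symm).trans (Equiv.refl _)) |>.trans (Equiv.refl _)⟩
    · -- non-positive: both empty
      haveI : IsEmpty {x : P // pf x = v} := by
        constructor
        rintro ⟨⟨x, hx⟩, h⟩
        have := hp0 x
        apply hv
        have : p x = v := h
        rw [← this]
        exact lt_of_le_of_ne (hp0 x) (Ne.symm hx)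
      haveI : IsEmpty {i : Q // qf i = v} := by
        constructor
        rintro ⟨⟨i, hi⟩, h⟩
        apply hv
        have : q i = v := h
        rw [← this]
        exact lt_of_le_of_ne (hq0 i) (Ne.symm hi)
      exact ⟨Equiv.equivOfIsEmpty _ _⟩
  let F : ∀ v : ℝ, {x : P // pf x = v} ≃ {i : Q // qf i = v} := fun v => (hF v).some
  let e : P ≃ Q :=
    (Equiv.sigmaFiberEquiv pf).symm.trans
      ((Equiv.sigmaCongrRight F).trans (Equiv.sigmaFiberEquiv qf))
  have hval : ∀ z : P, q ((e z) : ℕ) = p (z : X) := fun z => (F (pf z) ⟨z, rfl⟩).2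
  have hsupq : ∀ j : Function.support (fun i : ℕ => f (q i)), q (j : ℕ) ≠ 0 := by
    rintro ⟨j, hj⟩ hz
    apply hj
    show f (q j) = 0
    rw [hz, hf0]
  -- now apply tsum transfer
  apply tsum_eq_tsum_of_ne_zero_bij
    (i := fun j : Function.support (fun i : ℕ => f (q i)) =>
      ((e.symm ⟨(j : ℕ), hsupq j⟩ : P) : X))
  · intro a b hab
    have h1 : (e.symm ⟨(a : ℕ), hsupq a⟩ : P) = (e.symm ⟨(b : ℕ), hsupq b⟩ : P) :=
      Subtype.ext hab
    have h2 := e.symm.injective h1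
    have h3 : (a : ℕ) = (b : ℕ) := by simpa using congrArg Subtype.val h2
    exact Subtype.ext h3
  · intro x hx
    have hfx : f (p x) ≠ 0 := hx
    have hpx : p x ≠ 0 := fun hz => hfx (by rw [hz, hf0])
    set z : P := ⟨x, hpx⟩ with hzdef
    have hmem : (e z : ℕ) ∈ Function.support (fun i : ℕ => f (q i)) := by
      show f (q (e z : ℕ)) ≠ 0
      rw [hval z]
      exact hfx
    refine ⟨⟨(e z : ℕ), hmem⟩, ?_⟩
    show ((e.symm ⟨((e z : Q) : ℕ), _⟩ : P) : X) = x
    have hQeta : (⟨((e z : Q) : ℕ), hsupq ⟨(e z : ℕ), hmem⟩⟩ : Q) = e z := Subtype.ext rfl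
    rw [hQeta, e.symm_apply_apply]
  · intro j
    show f (p ((e.symm ⟨(j : ℕ), hsupq j⟩ : P) : X)) = f (q (j : ℕ))
    congr 1
    have := hval (e.symm ⟨(j : ℕ), hsupq j⟩)
    rw [e.apply_symm_apply] at this
    exact this.symm

end Bij

section Main

variable {X : Type*}

lemma q_nonneg (q : ℕ → ℝ) (hA : Antitone q)
    (hsumL : Summable (fun i => q i * lamt i)) : ∀ i, 0 ≤ q i := by
  by_contra hcon
  push_neg at hcon
  obtain ⟨N, hN⟩ := hcon
  have hten := hsumL.tendsto_atTop_zero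
  have h1 : ∀ᶠ i in atTop, q i * lamt i > -1 := by
    have := hten.eventually (eventually_gt_nhds (by norm_num : (-1:ℝ) < 0))
    exact this
  have hlog : Tendsto (fun i : ℕ => Real.logb 2 ((i:ℝ)+1)) atTop atTop := by
    apply Tendsto.atTop_div_const (Real.log_pos one_lt_two)
    apply Real.tendsto_log_atTop.comp
    apply tendsto_atTop_add_const_right
    exact tendsto_natCast_atTop_atTop
  have h2 : ∀ᶠ i : ℕ in atTop, Real.logb 2 ((i:ℝ)+1) ≥ 1/(-q N) := hlog.eventually_ge_atTop _
  have h3 : ∀ᶠ i in atTop, N ≤ i := eventually_ge_atTop N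
  obtain ⟨i, hi1, hi2, hi3⟩ := (h1.and (h2.and h3)).exists
  have hqi : q i ≤ q N := hA hi3
  have hlam : Real.logb 2 ((i:ℝ)+1) ≤ lamt i := logb_le_lamt i
  have hlamnn : 0 ≤ lamt i := lamt_nonneg i
  have hb1 : q i * lamt i ≤ q N * lamt i := mul_le_mul_of_nonneg_right hqi hlamnn
  have hb2 : q N * lamt i ≤ q N * Real.logb 2 ((i:ℝ)+1) := by
    apply mul_le_mul_of_nonpos_left hlam (le_of_lt hN)
  have hb3 : q N * Real.logb 2 ((i:ℝ)+1) ≤ q N * (1/(-q N)) := by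
    apply mul_le_mul_of_nonpos_left hi2 (le_of_lt hN)
  have : q N * (1/(-q N)) = -1 := by
    field_simp
    rw [div_self (ne_of_lt hN)]
  linarith

lemma q_tendsto (p : X → ℝ) (q : ℕ → ℝ) (hp0 : ∀ x, 0 ≤ p x) (hsum : HasSum p 1)
    (hA : Antitone q) (h0 : ∀ i, 0 ≤ q i)
    (hcount : ∀ t : ℝ, 0 < t → {x | t < p x}.ncard = {i | t < q i}.ncard) :
    Tendsto q atTop (nhds 0) := by
  have hbdd : BddBelow (Set.range q) := ⟨0, fun y ⟨i, hi⟩ => hi ▸ h0 i⟩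
  have htend : Tendsto q atTop (nhds (⨅ i, q i)) := tendsto_atTop_ciInf hA hbdd
  have hL0 : 0 ≤ ⨅ i, q i := le_ciInf h0
  rcases eq_or_lt_of_le hL0 with h | h
  · rwa [← h] at htend
  · exfalso
    set L := ⨅ i, q i with hLdef
    obtain ⟨x₀, hx₀⟩ : ∃ x, 0 < p x := by
      by_contra hc
      push_neg at hc
      have : ∀ x, p x = 0 := fun x => le_antisymm (hc x) (hp0 x)
      have h0' : HasSum p 0 := by
        rw [show p = (fun _ => (0:ℝ)) from funext this]
        exact hasSum_zero
      exact one_ne_zero (hsum.unique h0')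
    set t := min (L/2) (p x₀ / 2) with htdef
    have ht : 0 < t := lt_min (by linarith) (by linarith)
    have hq_all : ∀ i, t < q i := by
      intro i
      have : L ≤ q i := ciInf_le hbdd i
      have : t ≤ L/2 := min_le_left _ _
      linarith
    have hquniv : {i | t < q i} = Set.univ := Set.eq_univ_of_forall hq_all
    have hqcard : {i | t < q i}.ncard = 0 := by
      rw [hquniv]
      exact Set.Infinite.ncard (Set.infinite_univ)
    have hpfin : {x | t < p x}.Finite := finite_level_p p hp0 hsum ht
    have hpne : {x | t < p x}.Nonempty := ⟨x₀, by
      simp only [Set.mem_setOf_eq]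
      have : t ≤ p x₀/2 := min_le_right _ _
      linarith⟩
    have := (Set.ncard_pos hpfin).mpr hpne
    rw [hcount t ht, hqcard] at this
    omega

lemma flat_to_uniform (p : X → ℝ) (q : ℕ → ℝ) (hp0 : ∀ x, 0 ≤ p x)
    (hfinp : ∀ t : ℝ, 0 < t → {x | t < p x}.Finite)
    (hcount : ∀ t : ℝ, 0 < t → {x | t < p x}.ncard = {i | t < q i}.ncard)
    (n₀ : ℕ) (hflat1 : ∀ i ≤ n₀, q i = (((n₀:ℝ)+1))⁻¹) (hflat2 : ∀ i, n₀ < i → q i = 0) :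
    IsUniform p := by
  classical
  set n := n₀ + 1 with hndef
  set c : ℝ := (((n₀:ℝ)+1))⁻¹ with hcdef
  have hc : 0 < c := by positivity
  have hqval : ∀ i, q i = c ∨ q i = 0 := by
    intro i
    rcases le_or_gt i n₀ with h | h
    · exact Or.inl (hflat1 i h)
    · exact Or.inr (hflat2 i h)
  have hqlev : ∀ t : ℝ, 0 < t → t < c → {i | t < q i} = ↑(Finset.range n) := by
    intro t ht htc
    ext i
    simp only [Set.mem_setOf_eq, Finset.coe_range, Set.mem_Iio]
    constructor
    · intro hi
      by_contra hge
      push_neg at hge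
      rw [hflat2 i (by omega)] at hi
      linarith
    · intro hi
      rw [hflat1 i (by omega)]
      exact htc
  have hqcard : ∀ t : ℝ, 0 < t → t < c → {i | t < q i}.ncard = n := by
    intro t ht htc
    rw [hqlev t ht htc, Set.ncard_coe_finset, Finset.card_range]
  have hple : ∀ x, p x ≤ c := by
    intro x
    by_contra hcon
    push_neg at hcon
    have h1 : {i | c < q i} = ∅ := by
      ext i
      simp only [Set.mem_setOf_eq, Set.mem_empty_iff_false, iff_false, not_lt]
      rcases hqval i with h | h <;> rw [h] <;> linarith
    have h2 := hcount c hc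
    rw [h1] at h2
    simp only [Set.ncard_empty] at h2
    have hfin := hfinp c hc
    have : {x | c < p x} = ∅ := (Set.ncard_eq_zero hfin).mp h2
    have : x ∈ ({x | c < p x} : Set X) := hcon
    rw [‹{x | c < p x} = ∅›] at this
    exact this
  set A := {x | c/2 < p x} with hAdef
  have hAfin : A.Finite := hfinp (c/2) (by linarith)
  have hAcard : A.ncard = n := by
    rw [hcount (c/2) (by linarith)]
    exact hqcard (c/2) (by linarith) (by linarith)
  have hAval : ∀ x ∈ A, p x = c := by
    intro x hx
    by_contra hne
    have hlt : p x < c := lt_of_le_of_ne (hple x) hne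
    set t := max (c/2) (p x) with htdef
    have ht1 : 0 < t := lt_of_lt_of_le (by linarith) (le_max_left _ _)
    have ht2 : t < c := max_lt (by linarith) hlt
    have hsub : {x | t < p x} ⊆ A := by
      intro y hy
      simp only [Set.mem_setOf_eq] at *
      have := le_max_left (c/2) (p x)
      calc c/2 ≤ t := this
      _ < p y := hy
    have hcard2 : {x | t < p x}.ncard = n := by
      rw [hcount t ht1]
      exact hqcard t ht1 ht2
    have heqA : {x | t < p x} = A := by
      apply Set.eq_of_subset_of_ncard_le hsub _ hAfin
      rw [hcard2, hAcard]
    have : t < p x := by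
      have : x ∈ A := hx
      rw [← heqA] at this
      exact this
    have : p x ≤ t := le_max_right _ _
    linarith [‹t < p x›]
  have hAzero : ∀ x ∉ A, p x = 0 := by
    intro x hx
    by_contra hne
    have hpos : 0 < p x := lt_of_le_of_ne (hp0 x) (Ne.symm hne)
    have hle : p x ≤ c/2 := by
      by_contra h
      push_neg at h
      exact hx h
    set t := p x / 2 with htdef
    have ht1 : 0 < t := by linarith
    have ht2 : t < c := by linarith
    have hsub : A ⊆ {x | t < p x} := by
      intro y hy
      have hy' : c/2 < p y := hy
      show t < p y
      linarith
    have hcard2 : {x | t < p x}.ncard = n := by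
      rw [hcount t ht1]
      exact hqcard t ht1 ht2
    have heqA : A = {x | t < p x} := by
      apply Set.eq_of_subset_of_ncard_le hsub _ (hfinp t ht1)
      rw [hcard2, hAcard]
    have hmem : x ∈ {x | t < p x} := by
      simp only [Set.mem_setOf_eq]
      linarith
    rw [← heqA] at hmem
    have : c/2 < p x := hmem
    linarith
  refine ⟨hAfin.toFinset, ?_, ?_, ?_⟩
  · rw [Set.Finite.toFinset_nonempty]
    apply Set.nonempty_of_ncard_ne_zero
    rw [hAcard]
    omega
  · intro x hx
    rw [Set.Finite.mem_toFinset] at hx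
    rw [hAval x hx]
    have : hAfin.toFinset.card = n := by
      rw [← Set.ncard_eq_toFinset_card A hAfin, hAcard]
    rw [this, hcdef, hndef]
    push_cast
    norm_num
  · intro x hx
    rw [Set.Finite.mem_toFinset] at hx
    exact hAzero x hx

lemma uniform_to_flat (p : X → ℝ) (q : ℕ → ℝ) (hU : IsUniform p)
    (hA : Antitone q) (h0q : ∀ i, 0 ≤ q i)
    (hfinq : ∀ t : ℝ, 0 < t → {i | t < q i}.Finite)
    (hcount : ∀ t : ℝ, 0 < t → {x | t < p x}.ncard = {i | t < q i}.ncard) :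
    ∃ S : Finset X, S.Nonempty ∧ (∀ x ∈ S, p x = ((S.card : ℝ))⁻¹) ∧ (∀ x ∉ S, p x = 0)
      ∧ (∀ i < S.card, q i = ((S.card : ℝ))⁻¹) ∧ (∀ i, S.card ≤ i → q i = 0) := by
  obtain ⟨S, hSne, hSval, hSzero⟩ := hU
  set n := S.card with hndef
  have hn1 : 1 ≤ n := Finset.card_pos.mpr hSne
  set c : ℝ := ((n:ℝ))⁻¹ with hcdef
  have hc : 0 < c := by
    rw [hcdef]
    have : (0:ℝ) < (n:ℝ) := by exact_mod_cast hn1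
    positivity
  -- p level sets
  have hplev : ∀ t : ℝ, 0 < t → t < c → {x | t < p x} = ↑S := by
    intro t ht htc
    ext x
    simp only [Set.mem_setOf_eq, Finset.coe_sort_coe, Finset.mem_coe]
    constructor
    · intro hx
      by_contra hxS
      rw [hSzero x hxS] at hx
      linarith
    · intro hx
      rw [hSval x hx]
      exact htc
  have hplev2 : ∀ t : ℝ, c ≤ t → {x | t < p x} = ∅ := by
    intro t htc
    ext x
    simp only [Set.mem_setOf_eq, Set.mem_empty_iff_false, iff_false, not_lt]
    by_cases hx : x ∈ S
    · rw [hSval x hx]; exact htc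
    · rw [hSzero x hx]; linarith
  -- q ≤ c
  have hqle : ∀ i, q i ≤ c := by
    intro i
    by_contra hcon
    push_neg at hcon
    have h2 := hcount c hc
    rw [hplev2 c le_rfl] at h2
    simp only [Set.ncard_empty] at h2
    have hfin := hfinq c hc
    have hemp : {i | c < q i} = ∅ := (Set.ncard_eq_zero hfin).mp h2.symm
    have : i ∈ ({i | c < q i} : Set ℕ) := hcon
    rw [hemp] at this
    exact this
  -- level characterization
  have hqlev : ∀ t : ℝ, 0 < t → t < c → ∀ i, (t < q i ↔ i < n) := by
    intro t ht htc
    have hcard : {i | t < q i}.ncard = n := by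
      rw [← hcount t ht, hplev t ht htc, Set.ncard_coe_finset]
    have hfin := hfinq t ht
    intro i
    constructor
    · intro hi
      by_contra hge
      push_neg at hge
      have hsub : Set.Iic i ⊆ {j | t < q j} := by
        intro j hj
        have : q i ≤ q j := hA hj
        show t < q j
        linarith
      have hle := Set.ncard_le_ncard hsub hfin
      rw [hcard] at hle
      have : (Set.Iic i).ncard = i + 1 := by
        rw [show (Set.Iic i) = ↑(Finset.Iic i) by simp, Set.ncard_coe_finset, Nat.card_Iic]
      omega
    · intro hi
      by_contra hle
      push_neg at hle
      have hsub : {j | t < q j} ⊆ Set.Iio i := by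
        intro j hj
        have hj' : t < q j := hj
        show j < i
        by_contra hge
        push_neg at hge
        have : q j ≤ q i := hA hge
        linarith
      have hle2 := Set.ncard_le_ncard hsub (Set.finite_Iio i)
      rw [hcard] at hle2
      have : (Set.Iio i).ncard = i := by
        rw [show (Set.Iio i) = ↑(Finset.range i) by ext; simp, Set.ncard_coe_finset,
          Finset.card_range]
      omega
  have hqflat : ∀ i < n, q i = c := by
    intro i hi
    have hge : c ≤ q i := by
      by_contra hcon
      push_neg at hcon
      rcases le_or_gt (q i) 0 with h | h
      · have := (hqlev (c/2) (by linarith) (by linarith) i).mpr hi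
        linarith
      · have := (hqlev (q i) h hcon i).mpr hi
        linarith
    linarith [hqle i]
  have hqzero : ∀ i, n ≤ i → q i = 0 := by
    intro i hi
    by_contra hne
    have hpos : 0 < q i := lt_of_le_of_ne (h0q i) (Ne.symm hne)
    have ht1 : 0 < min (q i / 2) (c/2) := lt_min (by linarith) (by linarith)
    have ht2 : min (q i / 2) (c/2) < c := lt_of_le_of_lt (min_le_right _ _) (by linarith)
    have := (hqlev _ ht1 ht2 i).mp (lt_of_le_of_lt (min_le_left _ _) (by linarith))
    omega
  exact ⟨S, hSne, hSval, hSzero, hqflat, hqzero⟩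

end Main

lemma flat_lam_sum (q : ℕ → ℝ) (n : ℕ) (hn : 1 ≤ n)
    (hq1 : ∀ i < n, q i = ((n:ℝ))⁻¹) (hq2 : ∀ i, n ≤ i → q i = 0) :
    ∑' i, q i * lamt i = Real.logb 2 (n:ℝ) := by
  have hvanish : ∀ i ∉ Finset.range n, q i * lamt i = 0 := by
    intro i hi
    rw [Finset.mem_range, not_lt] at hi
    rw [hq2 i hi, zero_mul]
  rw [tsum_eq_sum hvanish]
  have : ∀ i ∈ Finset.range n, q i * lamt i = ((n:ℝ))⁻¹ * lamt i := by
    intro i hi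
    rw [hq1 i (Finset.mem_range.mp hi)]
  rw [Finset.sum_congr rfl this, ← Finset.mul_sum, sum_lamt]
  have hne : (n:ℝ) ≠ 0 := by positivity
  field_simp

lemma uniform_shEnt {X : Type*} (p : X → ℝ) (S : Finset X) (hSne : S.Nonempty)
    (hSval : ∀ x ∈ S, p x = ((S.card : ℝ))⁻¹) (hSzero : ∀ x ∉ S, p x = 0) :
    shEnt p = Real.logb 2 (S.card : ℝ) := by
  have hn1 : 1 ≤ S.card := Finset.card_pos.mpr hSne
  have hnne : ((S.card : ℝ)) ≠ 0 := by positivity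
  have hvanish : ∀ x ∉ S, -(p x * Real.logb 2 (p x)) = 0 := by
    intro x hx
    rw [hSzero x hx]
    simp
  rw [shEnt, tsum_eq_sum hvanish]
  have : ∀ x ∈ S, -(p x * Real.logb 2 (p x))
      = ((S.card : ℝ))⁻¹ * Real.logb 2 (S.card : ℝ) := by
    intro x hx
    rw [hSval x hx, Real.logb_inv]
    ring
  rw [Finset.sum_congr rfl this, Finset.sum_const, nsmul_eq_mul]
  field_simp


/-- `Λ(X) ≤ H(X)`, with equality iff `X` is uniformly distributed. -/
theorem stmt3 {X : Type*} (p : X → ℝ) (q : ℕ → ℝ)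
    (hpmf : IsPMF p) (hq : IsDescRearrange p q)
    (hsumL : Summable (fun i => q i * lamt i))
    (hsumH : Summable (fun x => -(p x * Real.logb 2 (p x)))) :
    (∑' i : ℕ, q i * lamt i) ≤ shEnt p ∧
      ((∑' i : ℕ, q i * lamt i) = shEnt p ↔ IsUniform p) := by
  obtain ⟨hp0, hsum⟩ := hpmf
  obtain ⟨hA, hcount⟩ := hq
  have h0q : ∀ i, 0 ≤ q i := q_nonneg q hA hsumL
  have hlimq : Tendsto q atTop (nhds 0) := q_tendsto p q hp0 hsum hA h0q hcount
  have hfinp : ∀ t : ℝ, 0 < t → {x | t < p x}.Finite := fun t ht => finite_level_p p hp0 hsum ht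
  have hfinq : ∀ t : ℝ, 0 < t → {i | t < q i}.Finite := by
    intro t ht
    obtain ⟨N, hN⟩ := Filter.eventually_atTop.mp (hlimq.eventually (gt_mem_nhds ht))
    apply (Set.finite_Iio N).subset
    intro i hi
    have hi' : t < q i := hi
    show i < N
    by_contra hge
    push_neg at hge
    have := hN i hge
    linarith
  have hptrans : ∀ f : ℝ → ℝ≥0∞, f 0 = 0 → ∑' x, f (p x) = ∑' i, f (q i) :=
    transfer_tsum p q hp0 h0q hfinp hfinq hcount
  have hofp : ∑' x, ENNReal.ofReal (p x) = 1 := by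
    rw [← ENNReal.ofReal_tsum_of_nonneg hp0 hsum.summable, hsum.tsum_eq]
    simp
  have hofq : ∑' i, ENNReal.ofReal (q i) = 1 := by
    rw [← hptrans ENNReal.ofReal (by simp)]
    exact hofp
  have hsq : Summable q := by
    have h := ENNReal.summable_toReal (f := fun i => ENNReal.ofReal (q i))
      (by rw [hofq]; exact ENNReal.one_ne_top)
    have : (fun i => (ENNReal.ofReal (q i)).toReal) = q := by
      funext i
      rw [ENNReal.toReal_ofReal (h0q i)]
    rwa [this] at h
  have htq : ∑' i, q i = 1 := by
    have h1 : ENNReal.ofReal (∑' i, q i) = 1 := by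
      rw [ENNReal.ofReal_tsum_of_nonneg h0q hsq, hofq]
    have h2 : 0 ≤ ∑' i, q i := tsum_nonneg h0q
    rw [← ENNReal.ofReal_one] at h1
    exact (ENNReal.ofReal_eq_ofReal_iff h2 (by norm_num)).mp h1
  have hHt : ∑' x, ENNReal.ofReal (-(p x * Real.logb 2 (p x)))
      = ∑' i, ENNReal.ofReal (-(q i * Real.logb 2 (q i))) :=
    hptrans (fun v => ENNReal.ofReal (-(v * Real.logb 2 v))) (by simp)
  have hΛof : ENNReal.ofReal (∑' i, q i * lamt i) = ∑' i, ENNReal.ofReal (q i * lamt i) :=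
    ENNReal.ofReal_tsum_of_nonneg (fun i => mul_nonneg (h0q i) (lamt_nonneg i)) hsumL
  have hHnn : ∀ x, 0 ≤ -(p x * Real.logb 2 (p x)) := by
    intro x
    have hle1 : p x ≤ 1 := by
      have := le_hasSum hsum x (fun j _ => hp0 j)
      linarith
    have := Real.logb_nonpos one_lt_two (hp0 x) hle1
    nlinarith [hp0 x]
  have hHof : ENNReal.ofReal (shEnt p) = ∑' x, ENNReal.ofReal (-(p x * Real.logb 2 (p x))) :=
    ENNReal.ofReal_tsum_of_nonneg hHnn hsumH
  have hC := stepC q hA h0q hlimq hsq htq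
  have hHne : (∑' i, ENNReal.ofReal (-(q i * Real.logb 2 (q i)))) ≠ ⊤ := by
    rw [← hHt, ← hHof]
    exact ENNReal.ofReal_ne_top
  have hineq : (∑' i : ℕ, q i * lamt i) ≤ shEnt p := by
    have h1 : ENNReal.ofReal (∑' i : ℕ, q i * lamt i) ≤ ENNReal.ofReal (shEnt p) := by
      rw [hΛof, hHof, hHt]
      exact hC.1
    exact (ENNReal.ofReal_le_ofReal_iff (by exact tsum_nonneg fun x => hHnn x)).mp h1
  refine ⟨hineq, ?_, ?_⟩
  · intro heq
    have hEeq : (∑' i, ENNReal.ofReal (q i * lamt i))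
        = ∑' i, ENNReal.ofReal (-(q i * Real.logb 2 (q i))) := by
      rw [← hΛof, heq, hHof, hHt]
    obtain ⟨n₀, hflat1, hflat2⟩ := hC.2 hHne hEeq
    exact flat_to_uniform p q hp0 hfinp hcount n₀ hflat1 hflat2
  · intro hU
    obtain ⟨S, hSne, hSval, hSzero, hqflat, hqzero⟩ :=
      uniform_to_flat p q hU hA h0q hfinq hcount
    rw [flat_lam_sum q S.card (Finset.card_pos.mpr hSne) hqflat hqzero,
      uniform_shEnt p S hSne hSval hSzero]
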